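/- arXiv:1505.04854 — 2 statements merged into one kernel-verified Lean document; each statement's English description precedes it below -/
import Mathlib

section
/- Every subgraph of a weak IASI graph is a weak IASI graph: if a finite simple graph G admits a weak integer additive set-indexer and H is a subgraph of G, then H admits a weak integer additive set-indexer. -/
open Finset Pointwise

namespace IASIPaper

variable {V : Type*}

/-- The induced edge labeling: `f⁺(uv) = f(u) + f(v)` (sumset). -/
def edgeLabel (f : V → Finset ℕ) : Sym2 V → Finset ℕ :=
  Sym2.lift ⟨fun u v => f u + f v, fun u v => add_comm (f u) (f v)⟩

/-- An integer additive set-indexer of a simple graph `G`. -/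
def IsIASI (G : SimpleGraph V) (f : V → Finset ℕ) : Prop :=
  (∀ v, (f v).Nonempty) ∧ Function.Injective f ∧
    Set.InjOn (edgeLabel f) G.edgeSet

/-- A weak integer additive set-indexer. -/
def IsWeakIASI (G : SimpleGraph V) (f : V → Finset ℕ) : Prop :=
  IsIASI G f ∧ ∀ ⦃u v : V⦄, G.Adj u v → (f u + f v).card = max (f u).card (f v).card

/-- The number of mono-indexed edges of `G` under `f`. -/
noncomputable def monoEdgeCount (G : SimpleGraph V) (f : V → Finset ℕ) : ℕ :=
  {e | e ∈ G.edgeSet ∧ (edgeLabel f e).card = 1}.ncard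

/-- The number of mono-indexed vertices under `f`. -/
noncomputable def monoVertexCount (f : V → Finset ℕ) : ℕ :=
  {v | (f v).card = 1}.ncard

/-- The sparing number of `G`. -/
noncomputable def sparingNumber (G : SimpleGraph V) : ℕ :=
  sInf { k | ∃ f, IsWeakIASI G f ∧ monoEdgeCount G f = k }

/-- The minimum number of mono-indexed vertices among weak IASIs of `G`
attaining exactly `sparingNumber G` mono-indexed edges. -/
noncomputable def minMonoVertices (G : SimpleGraph V) : ℕ :=
  sInf { k | ∃ f, IsWeakIASI G f ∧ monoEdgeCount G f = sparingNumber G ∧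
    monoVertexCount f = k }

/-- The edge corona `G₁ ⋄ G₂`: take one copy of `G₂` for every edge of `G₁`
and join both end vertices of that edge to every vertex of the copy. -/
def edgeCorona {V₁ V₂ : Type*} (G₁ : SimpleGraph V₁) (G₂ : SimpleGraph V₂) :
    SimpleGraph (V₁ ⊕ (G₁.edgeSet × V₂)) where
  Adj a b :=
    match a, b with
    | Sum.inl u, Sum.inl v => G₁.Adj u v
    | Sum.inl u, Sum.inr ex => u ∈ (ex.1 : Sym2 V₁)
    | Sum.inr ex, Sum.inl v => v ∈ (ex.1 : Sym2 V₁)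
    | Sum.inr ex, Sum.inr ey => ex.1 = ey.1 ∧ G₂.Adj ex.2 ey.2
  symm := ⟨by
    rintro (u | ⟨e, x⟩) (v | ⟨e', y⟩) h
    · exact h.symm
    · exact h
    · exact h
    · exact ⟨h.1.symm, h.2.symm⟩⟩
  loopless := ⟨by
    rintro (u | ⟨e, x⟩) h
    · exact G₁.irrefl h
    · exact G₂.irrefl h.2⟩


/-- Every subgraph of a weak IASI graph is a weak IASI graph. -/
theorem subgraph_weakIASI {V : Type*} [Fintype V] (G : SimpleGraph V)
    (hG : ∃ f : V → Finset ℕ, IsWeakIASI G f) (H : G.Subgraph) :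
    ∃ g : H.verts → Finset ℕ, IsWeakIASI H.coe g := by
  obtain ⟨f, ⟨⟨hne, hinj, hedge⟩, hw⟩⟩ := hG
  refine ⟨fun v => f v, ⟨⟨fun v => hne v, fun u v huv => ?_, ?_⟩, ?_⟩⟩
  · exact Subtype.ext (hinj huv)
  · intro e he e' he' hlab
    have key : ∀ (x : Sym2 H.verts), edgeLabel (fun v : H.verts => f v) x
        = edgeLabel f (x.map Subtype.val) := by
      intro x; induction x using Sym2.inductionOn with
      | hf u v => rfl
    have hmem : ∀ {x : Sym2 H.verts}, x ∈ H.coe.edgeSet →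
        x.map Subtype.val ∈ G.edgeSet := by
      intro x hx
      induction x using Sym2.inductionOn with
      | hf u v => exact hx.adj_sub
    have := hedge (hmem he) (hmem he') (by rw [← key, ← key, hlab])
    exact Sym2.map.injective Subtype.val_injective this
  · intro u v huv
    exact hw huv.adj_sub

end IASIPaper
end

section
/- Let Pₘ be a path on m vertices with m > 1 and Kₙ the complete graph on n vertices. Then the sparing number of the edge corona Pₘ ⋄ Kₙ is φ(Pₘ ⋄ Kₙ) = n(n+1)(m−1)/2. -/
open Finset Pointwise

namespace IASIPaper

variable {V : Type*}

/-! ### Auxiliary lemmas -/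

section TwoPow

lemma two_pow_aux {i j k l : ℕ} (hij : i < j) (hkl : k < l) (hik : i < k)
    (h : 2^i + 2^j = 2^k + 2^l) : False := by
  have h1 : (2:ℕ)^(i+1) ∣ 2^i := by
    have d1 : (2:ℕ)^(i+1) ∣ 2^j := pow_dvd_pow 2 (by omega)
    have d2 : (2:ℕ)^(i+1) ∣ 2^k := pow_dvd_pow 2 (by omega)
    have d3 : (2:ℕ)^(i+1) ∣ 2^l := pow_dvd_pow 2 (by omega)
    have : (2:ℕ)^i = 2^k + 2^l - 2^j := by omega
    rw [this]
    exact Nat.dvd_sub (Nat.dvd_add d2 d3) d1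
  have h2 := Nat.le_of_dvd (by positivity) h1
  have h3 : (2:ℕ)^i < 2^(i+1) := Nat.pow_lt_pow_right (by norm_num) (by omega)
  omega

lemma two_pow_core {i j k l : ℕ} (hij : i < j) (hkl : k < l)
    (h : 2^i + 2^j = 2^k + 2^l) : i = k ∧ j = l := by
  rcases lt_trichotomy i k with hik | hik | hik
  · exact absurd (two_pow_aux hij hkl hik h) (by simp)
  · subst hik
    have hjl : (2:ℕ)^j = 2^l := by omega
    exact ⟨rfl, Nat.pow_right_injective (by norm_num) hjl⟩
  · exact absurd (two_pow_aux hkl hij hik h.symm) (by simp)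

lemma two_pow_sum_inj {a b c d : ℕ} (hab : a ≠ b) (hcd : c ≠ d)
    (h : 2^a + 2^b = 2^c + 2^d) : (a = c ∧ b = d) ∨ (a = d ∧ b = c) := by
  rcases hab.lt_or_gt with h1 | h1 <;> rcases hcd.lt_or_gt with h2 | h2
  · exact Or.inl (two_pow_core h1 h2 h)
  · exact Or.inr (two_pow_core h1 h2 (by omega))
  · exact Or.inr (by have := two_pow_core h1 h2 (by omega); tauto)
  · exact Or.inl (by have := two_pow_core h1 h2 (by omega); tauto)

lemma doubleton_card (a : ℕ) : ({a, a+1} : Finset ℕ).card = 2 := by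
  rw [Finset.card_insert_of_notMem (by simp)]; simp

lemma doubleton_eq {a b : ℕ} (h : ({a, a+1} : Finset ℕ) = {b, b+1}) : a = b := by
  have h1 : a ∈ ({b, b+1} : Finset ℕ) := by rw [← h]; simp
  have h2 : b ∈ ({a, a+1} : Finset ℕ) := by rw [h]; simp
  simp at h1 h2; omega

lemma singleton_ne_doubleton {a b : ℕ} : ({a} : Finset ℕ) ≠ {b, b+1} := by
  intro h
  have := congrArg Finset.card h
  rw [doubleton_card] at this
  simp at this

end TwoPow

/-! ### The generic construction -/

section Construction

variable {G : SimpleGraph V} (g : V → ℕ) (D : V → Prop) [DecidablePred D]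

/-- The generic weak IASI construction: doubletons on `D`, singletons elsewhere. -/
def cf (v : V) : Finset ℕ := if D v then {2^(g v), 2^(g v)+1} else {2^(g v)}

lemma cf_of_D {v : V} (h : D v) : cf g D v = {2^(g v), 2^(g v)+1} := if_pos h

lemma cf_of_nD {v : V} (h : ¬ D v) : cf g D v = {2^(g v)} := if_neg h

lemma cf_nonempty (v : V) : (cf g D v).Nonempty := by
  unfold cf; split <;> simp

lemma cf_card_D {v : V} (h : D v) : (cf g D v).card = 2 := by
  rw [cf_of_D g D h, doubleton_card]

lemma cf_card_nD {v : V} (h : ¬ D v) : (cf g D v).card = 1 := by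
  rw [cf_of_nD g D h]; simp

lemma cf_add_nn {u v : V} (hu : ¬ D u) (hv : ¬ D v) :
    cf g D u + cf g D v = {2^(g u) + 2^(g v)} := by
  rw [cf_of_nD g D hu, cf_of_nD g D hv]
  ext x; simp [Finset.mem_add]

lemma cf_add_dn {u v : V} (hu : D u) (hv : ¬ D v) :
    cf g D u + cf g D v = {2^(g u) + 2^(g v), (2^(g u) + 2^(g v)) + 1} := by
  rw [cf_of_D g D hu, cf_of_nD g D hv]
  ext x; simp [Finset.mem_add]; omega

lemma cf_add_nd {u v : V} (hu : ¬ D u) (hv : D v) :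
    cf g D u + cf g D v = {2^(g u) + 2^(g v), (2^(g u) + 2^(g v)) + 1} := by
  rw [add_comm, cf_add_dn g D hv hu, add_comm (2^(g v))]

lemma cf_inj (hg : Function.Injective g) : Function.Injective (cf g D) := by
  intro u v h
  apply hg
  apply Nat.pow_right_injective (le_refl 2)
  by_cases hu : D u <;> by_cases hv : D v
  · rw [cf_of_D g D hu, cf_of_D g D hv] at h
    exact doubleton_eq h
  · rw [cf_of_D g D hu, cf_of_nD g D hv] at h
    exact absurd h.symm singleton_ne_doubleton
  · rw [cf_of_nD g D hu, cf_of_D g D hv] at h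
    exact absurd h singleton_ne_doubleton
  · rw [cf_of_nD g D hu, cf_of_nD g D hv] at h
    simpa using h

lemma cf_ge {v : V} {y : ℕ} (hy : y ∈ cf g D v) : 2^(g v) ≤ y := by
  unfold cf at hy
  split at hy <;> simp at hy <;> omega

lemma cf_mem (v : V) : 2^(g v) ∈ cf g D v := by
  unfold cf; split <;> simp

lemma cf_sum_mem (u v : V) : 2^(g u) + 2^(g v) ∈ cf g D u + cf g D v :=
  Finset.add_mem_add (cf_mem g D u) (cf_mem g D v)

lemma cf_sum_le {u v : V} {x : ℕ} (hx : x ∈ cf g D u + cf g D v) :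
    2^(g u) + 2^(g v) ≤ x := by
  rw [Finset.mem_add] at hx
  obtain ⟨y, hy, z, hz, rfl⟩ := hx
  have := cf_ge g D hy
  have := cf_ge g D hz
  omega

lemma cf_weak (hg : Function.Injective g)
    (hind : ∀ u v, G.Adj u v → ¬ (D u ∧ D v)) : IsWeakIASI G (cf g D) := by
  refine ⟨⟨cf_nonempty g D, cf_inj g D hg, ?_⟩, ?_⟩
  · intro x hx y hy hxy
    induction x using Sym2.ind with | _ u v => ?_
    induction y using Sym2.ind with | _ p q => ?_
    simp only [edgeLabel, Sym2.lift_mk] at hxy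
    rw [SimpleGraph.mem_edgeSet] at hx hy
    have key : 2^(g u) + 2^(g v) = 2^(g p) + 2^(g q) := by
      refine le_antisymm (cf_sum_le g D ?_) (cf_sum_le g D ?_)
      · rw [hxy]; exact cf_sum_mem g D p q
      · rw [← hxy]; exact cf_sum_mem g D u v
    have huv : g u ≠ g v := fun h => hx.ne (hg h)
    have hpq : g p ≠ g q := fun h => hy.ne (hg h)
    rw [Sym2.eq_iff]
    rcases two_pow_sum_inj huv hpq key with ⟨h1, h2⟩ | ⟨h1, h2⟩
    · exact Or.inl ⟨hg h1, hg h2⟩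
    · exact Or.inr ⟨hg h1, hg h2⟩
  · intro u v h
    by_cases hu : D u <;> by_cases hv : D v
    · exact absurd ⟨hu, hv⟩ (hind u v h)
    · rw [cf_add_dn g D hu hv, doubleton_card, cf_card_D g D hu, cf_card_nD g D hv]; simp
    · rw [cf_add_nd g D hu hv, doubleton_card, cf_card_nD g D hu, cf_card_D g D hv]; simp
    · rw [cf_add_nn g D hu hv, cf_card_nD g D hu, cf_card_nD g D hv]; simp

/-- A mono edge of the construction has both endpoints outside `D`. -/
lemma cf_mono {u v : V} (hind : ¬ (D u ∧ D v))
    (h : (cf g D u + cf g D v).card = 1) : ¬ D u ∧ ¬ D v := by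
  by_cases hu : D u <;> by_cases hv : D v
  · exact absurd ⟨hu, hv⟩ hind
  · rw [cf_add_dn g D hu hv] at h; rw [doubleton_card] at h; omega
  · rw [cf_add_nd g D hu hv] at h; rw [doubleton_card] at h; omega
  · exact ⟨hu, hv⟩

end Construction

/-! ### At most one non-singleton endpoint on each edge -/

lemma weak_singleton_or {G : SimpleGraph V} {f : V → Finset ℕ} (hf : IsWeakIASI G f)
    {u v : V} (h : G.Adj u v) : (f u).card = 1 ∨ (f v).card = 1 := by
  by_contra hc
  push_neg at hc
  have hu := hf.1.1 u
  have hv := hf.1.1 v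
  have h1 : (f u).card + (f v).card - 1 ≤ (f u + f v).card :=
    cauchy_davenport_add_of_linearOrder_isCancelAdd hu hv
  have h2 := hf.2 h
  have hu1 : 1 ≤ (f u).card := Finset.card_pos.2 hu
  have hv1 : 1 ≤ (f v).card := Finset.card_pos.2 hv
  rcases max_cases (f u).card (f v).card with ⟨he, _⟩ | ⟨he, _⟩ <;> omega


/-! ### The specific graph -/

section Specific

open Sum SimpleGraph

@[simp] lemma edgeCorona_adj_inl_inl {V₁ V₂ : Type*} {G₁ : SimpleGraph V₁} {G₂ : SimpleGraph V₂}
    {u v : V₁} : (edgeCorona G₁ G₂).Adj (inl u) (inl v) ↔ G₁.Adj u v := Iff.rfl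

@[simp] lemma edgeCorona_adj_inl_inr {V₁ V₂ : Type*} {G₁ : SimpleGraph V₁} {G₂ : SimpleGraph V₂}
    {u : V₁} {ex : G₁.edgeSet × V₂} :
    (edgeCorona G₁ G₂).Adj (inl u) (inr ex) ↔ u ∈ (ex.1 : Sym2 V₁) := Iff.rfl

@[simp] lemma edgeCorona_adj_inr_inl {V₁ V₂ : Type*} {G₁ : SimpleGraph V₁} {G₂ : SimpleGraph V₂}
    {v : V₁} {ex : G₁.edgeSet × V₂} :
    (edgeCorona G₁ G₂).Adj (inr ex) (inl v) ↔ v ∈ (ex.1 : Sym2 V₁) := Iff.rfl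

@[simp] lemma edgeCorona_adj_inr_inr {V₁ V₂ : Type*} {G₁ : SimpleGraph V₁} {G₂ : SimpleGraph V₂}
    {ex ey : G₁.edgeSet × V₂} :
    (edgeCorona G₁ G₂).Adj (inr ex) (inr ey) ↔ ex.1 = ey.1 ∧ G₂.Adj ex.2 ey.2 := Iff.rfl

lemma sym2_two_mem {α : Type*} {u v : α} {z : Sym2 α} (h : u ≠ v) (hu : u ∈ z) (hv : v ∈ z) :
    z = s(u, v) := by
  induction z using Sym2.ind with | _ a b => ?_
  rw [Sym2.mem_iff] at hu hv
  rcases hu with rfl | rfl <;> rcases hv with rfl | rfl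
  · exact absurd rfl h
  · rfl
  · exact Sym2.eq_swap
  · exact absurd rfl h

variable (m n : ℕ)

attribute [local instance] Classical.propDecidable

noncomputable local instance : Fintype ((SimpleGraph.pathGraph m).edgeSet) :=
  Fintype.ofFinite _

noncomputable local instance :
    Fintype (Fin m ⊕ ((SimpleGraph.pathGraph m).edgeSet × Fin n)) :=
  Fintype.ofFinite _

/-- The block of vertices associated to a path edge `e`. -/
noncomputable def Wb (e : (SimpleGraph.pathGraph m).edgeSet) :
    Finset (Fin m ⊕ ((SimpleGraph.pathGraph m).edgeSet × Fin n)) :=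
  univ.filter fun v => Sum.elim (fun u => u ∈ (e : Sym2 (Fin m))) (fun p => p.1 = e) v

lemma mem_Wb_inl {e : (SimpleGraph.pathGraph m).edgeSet} {u : Fin m} :
    inl u ∈ Wb m n e ↔ u ∈ (e : Sym2 (Fin m)) := by
  simp [Wb]

lemma mem_Wb_inr {e : (SimpleGraph.pathGraph m).edgeSet}
    {p : (SimpleGraph.pathGraph m).edgeSet × Fin n} :
    inr p ∈ Wb m n e ↔ p.1 = e := by
  simp [Wb]

lemma Wb_card (e : (SimpleGraph.pathGraph m).edgeSet) : (Wb m n e).card = n + 2 := by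
  obtain ⟨z, hz⟩ := e
  induction z using Sym2.ind with | _ a b => ?_
  have hadj : (SimpleGraph.pathGraph m).Adj a b := hz
  have hab : a ≠ b := hadj.ne
  have hW : Wb m n ⟨s(a, b), hz⟩ =
      {inl a, inl b} ∪ (univ : Finset (Fin n)).image (fun x => inr (⟨s(a, b), hz⟩, x)) := by
    ext v
    cases v with
    | inl u =>
        rw [mem_Wb_inl]
        simp [Sym2.mem_iff]
    | inr p =>
        rw [mem_Wb_inr]
        constructor
        · intro h
          apply mem_union_right
          rw [mem_image]
          exact ⟨p.2, mem_univ _, by rw [← h]⟩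
        · intro h
          rcases mem_union.1 h with h1 | h1
          · rcases mem_insert.1 h1 with h2 | h2
            · exact absurd h2 (by simp)
            · exact absurd (mem_singleton.1 h2) (by simp)
          · obtain ⟨x, -, hx⟩ := mem_image.1 h1
            exact congrArg Prod.fst (Sum.inr_injective hx).symm
  rw [hW, card_union_of_disjoint, card_image_of_injective, card_univ, Fintype.card_fin]
  · rw [card_insert_of_notMem (by simp [hab]), card_singleton]
    omega
  · intro x y hxy
    simpa using hxy
  · rw [Finset.disjoint_left]
    rintro x hx hx2
    simp only [mem_insert, mem_singleton] at hx
    rcases hx with rfl | rfl <;> simp at hx2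

lemma Wb_clique {e : (SimpleGraph.pathGraph m).edgeSet}
    {a b : Fin m ⊕ ((SimpleGraph.pathGraph m).edgeSet × Fin n)}
    (ha : a ∈ Wb m n e) (hb : b ∈ Wb m n e) (hab : a ≠ b) :
    (edgeCorona (SimpleGraph.pathGraph m) (⊤ : SimpleGraph (Fin n))).Adj a b := by
  obtain ⟨z, hz⟩ := e
  induction z using Sym2.ind with | _ p q => ?_
  have hadj : (SimpleGraph.pathGraph m).Adj p q := hz
  cases a with
  | inl u =>
    cases b with
    | inl v =>
      rw [mem_Wb_inl] at ha hb
      rw [edgeCorona_adj_inl_inl]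
      have huv : u ≠ v := fun h => hab (congrArg inl h)
      rw [Sym2.mem_iff] at ha hb
      rcases ha with rfl | rfl <;> rcases hb with rfl | rfl
      · exact absurd rfl huv
      · exact hadj
      · exact hadj.symm
      · exact absurd rfl huv
    | inr r =>
      rw [mem_Wb_inl] at ha
      rw [mem_Wb_inr] at hb
      rw [edgeCorona_adj_inl_inr, hb]
      exact ha
  | inr r =>
    cases b with
    | inl v =>
      rw [mem_Wb_inr] at ha
      rw [mem_Wb_inl] at hb
      rw [edgeCorona_adj_inr_inl, ha]
      exact hb
    | inr r' =>
      rw [mem_Wb_inr] at ha hb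
      rw [edgeCorona_adj_inr_inr]
      refine ⟨ha.trans hb.symm, ?_⟩
      rw [SimpleGraph.top_adj]
      intro h2
      exact hab (by rw [Prod.ext (ha.trans hb.symm) h2])

lemma adj_block {a b : Fin m ⊕ ((SimpleGraph.pathGraph m).edgeSet × Fin n)}
    (h : (edgeCorona (SimpleGraph.pathGraph m) (⊤ : SimpleGraph (Fin n))).Adj a b) :
    ∃ e, a ∈ Wb m n e ∧ b ∈ Wb m n e := by
  cases a with
  | inl u =>
    cases b with
    | inl v =>
      rw [edgeCorona_adj_inl_inl] at h
      exact ⟨⟨s(u, v), h⟩, (mem_Wb_inl m n).2 (Sym2.mem_mk_left u v),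
        (mem_Wb_inl m n).2 (Sym2.mem_mk_right u v)⟩
    | inr p =>
      rw [edgeCorona_adj_inl_inr] at h
      exact ⟨p.1, (mem_Wb_inl m n).2 h, (mem_Wb_inr m n).2 rfl⟩
  | inr p =>
    cases b with
    | inl v =>
      rw [edgeCorona_adj_inr_inl] at h
      exact ⟨p.1, (mem_Wb_inr m n).2 rfl, (mem_Wb_inl m n).2 h⟩
    | inr q =>
      rw [edgeCorona_adj_inr_inr] at h
      exact ⟨p.1, (mem_Wb_inr m n).2 rfl, (mem_Wb_inr m n).2 h.1.symm⟩

lemma block_unique {a b : Fin m ⊕ ((SimpleGraph.pathGraph m).edgeSet × Fin n)}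
    {e e' : (SimpleGraph.pathGraph m).edgeSet}
    (ha : a ∈ Wb m n e) (hb : b ∈ Wb m n e) (ha' : a ∈ Wb m n e') (hb' : b ∈ Wb m n e')
    (hab : a ≠ b) : e = e' := by
  cases a with
  | inr p => exact ((mem_Wb_inr m n).1 ha).symm.trans ((mem_Wb_inr m n).1 ha')
  | inl u =>
    cases b with
    | inr q => exact ((mem_Wb_inr m n).1 hb).symm.trans ((mem_Wb_inr m n).1 hb')
    | inl v =>
      have huv : u ≠ v := fun h => hab (congrArg inl h)
      rw [mem_Wb_inl] at ha hb ha' hb'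
      apply Subtype.ext
      rw [sym2_two_mem huv ha hb, sym2_two_mem huv ha' hb']

lemma card_pathGraph_edgeSet :
    Fintype.card ((SimpleGraph.pathGraph m).edgeSet) = m - 1 := by
  have hbe : ∀ i : Fin (m - 1), s((⟨i.1, by omega⟩ : Fin m), (⟨i.1 + 1, by omega⟩ : Fin m)) ∈
      (SimpleGraph.pathGraph m).edgeSet := by
    intro i
    rw [SimpleGraph.mem_edgeSet, SimpleGraph.pathGraph_adj]
    exact Or.inl rfl
  let be : Fin (m - 1) → ((SimpleGraph.pathGraph m).edgeSet) := fun i => ⟨_, hbe i⟩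
  have hbij : Function.Bijective be := by
    constructor
    · intro i j hij
      have := congrArg Subtype.val hij
      rw [Sym2.eq_iff] at this
      apply Fin.ext
      rcases this with ⟨h1, h2⟩ | ⟨h1, h2⟩ <;>
        · have e1 := congrArg Fin.val h1
          have e2 := congrArg Fin.val h2
          simp only [] at e1 e2
          omega
    · rintro ⟨z, hz⟩
      induction z using Sym2.ind with | _ u v => ?_
      have hadj : (SimpleGraph.pathGraph m).Adj u v := hz
      rw [SimpleGraph.pathGraph_adj] at hadj
      rcases hadj with h1 | h1
      · refine ⟨⟨u.1, by omega⟩, ?_⟩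
        apply Subtype.ext
        rw [Sym2.eq_iff]
        exact Or.inl ⟨Fin.ext rfl, Fin.ext (by simpa using h1)⟩
      · refine ⟨⟨v.1, by omega⟩, ?_⟩
        apply Subtype.ext
        rw [Sym2.eq_iff]
        exact Or.inr ⟨Fin.ext rfl, Fin.ext (by simpa using h1)⟩
  rw [← Fintype.card_of_bijective hbij, Fintype.card_fin]

/-- The mono-indexed edges, as a finset. -/
noncomputable def MF (f : Fin m ⊕ ((SimpleGraph.pathGraph m).edgeSet × Fin n) → Finset ℕ) :
    Finset (Sym2 (Fin m ⊕ ((SimpleGraph.pathGraph m).edgeSet × Fin n))) :=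
  Set.toFinset {x | x ∈ (edgeCorona (SimpleGraph.pathGraph m)
    (⊤ : SimpleGraph (Fin n))).edgeSet ∧ (edgeLabel f x).card = 1}

lemma monoEdgeCount_eq (f : Fin m ⊕ ((SimpleGraph.pathGraph m).edgeSet × Fin n) → Finset ℕ) :
    monoEdgeCount (edgeCorona (SimpleGraph.pathGraph m) (⊤ : SimpleGraph (Fin n))) f
      = (MF m n f).card :=
  Set.ncard_eq_toFinset_card' _

/-- The candidate mono edges inside the block of `e`. -/
noncomputable def Tb (f : Fin m ⊕ ((SimpleGraph.pathGraph m).edgeSet × Fin n) → Finset ℕ)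
    (e : (SimpleGraph.pathGraph m).edgeSet) :
    Finset (Sym2 (Fin m ⊕ ((SimpleGraph.pathGraph m).edgeSet × Fin n))) :=
  ((Wb m n e).filter fun v => (f v).card = 1).offDiag.image (fun p => s(p.1, p.2))

lemma Tb_card_eq (f : Fin m ⊕ ((SimpleGraph.pathGraph m).edgeSet × Fin n) → Finset ℕ)
    (e : (SimpleGraph.pathGraph m).edgeSet) :
    (Tb m n f e).card = (((Wb m n e).filter fun v => (f v).card = 1).card).choose 2 :=
  Sym2.card_image_offDiag _

lemma Tb_subset_MF {f : Fin m ⊕ ((SimpleGraph.pathGraph m).edgeSet × Fin n) → Finset ℕ}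
    (hf : IsWeakIASI (edgeCorona (SimpleGraph.pathGraph m) (⊤ : SimpleGraph (Fin n))) f)
    (e : (SimpleGraph.pathGraph m).edgeSet) : Tb m n f e ⊆ MF m n f := by
  intro x hx
  rw [Tb, Finset.mem_image] at hx
  obtain ⟨⟨a, b⟩, hab, rfl⟩ := hx
  rw [Finset.mem_offDiag] at hab
  obtain ⟨ha, hb, hne⟩ := hab
  rw [Finset.mem_filter] at ha hb
  have hadj := Wb_clique m n ha.1 hb.1 hne
  rw [MF, Set.mem_toFinset]
  refine ⟨hadj, ?_⟩
  simp only [edgeLabel, Sym2.lift_mk]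
  rw [hf.2 hadj, ha.2, hb.2]
  rfl

lemma Tb_disjoint (f : Fin m ⊕ ((SimpleGraph.pathGraph m).edgeSet × Fin n) → Finset ℕ)
    {e e' : (SimpleGraph.pathGraph m).edgeSet} (hee : e ≠ e') :
    Disjoint (Tb m n f e) (Tb m n f e') := by
  rw [Finset.disjoint_left]
  intro x hx hx'
  rw [Tb, Finset.mem_image] at hx hx'
  obtain ⟨⟨a, b⟩, hab, rfl⟩ := hx
  obtain ⟨⟨c, d⟩, hcd, hx⟩ := hx'
  rw [Finset.mem_offDiag] at hab hcd
  obtain ⟨ha, hb, hne⟩ := hab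
  obtain ⟨hc, hd, hne'⟩ := hcd
  rw [Finset.mem_filter] at ha hb hc hd
  rw [Sym2.eq_iff] at hx
  apply hee
  rcases hx with ⟨rfl, rfl⟩ | ⟨rfl, rfl⟩
  · exact block_unique m n ha.1 hb.1 hc.1 hd.1 hne
  · exact block_unique m n ha.1 hb.1 hd.1 hc.1 hne

lemma Tb_card_lower {f : Fin m ⊕ ((SimpleGraph.pathGraph m).edgeSet × Fin n) → Finset ℕ}
    (hf : IsWeakIASI (edgeCorona (SimpleGraph.pathGraph m) (⊤ : SimpleGraph (Fin n))) f)
    (e : (SimpleGraph.pathGraph m).edgeSet) :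
    (n + 1).choose 2 ≤ (Tb m n f e).card := by
  rw [Tb_card_eq]
  apply Nat.choose_le_choose
  have hneg : (((Wb m n e).filter fun v => ¬ ((f v).card = 1)).card) ≤ 1 := by
    rw [Finset.card_le_one]
    intro a ha b hb
    by_contra hab
    rw [Finset.mem_filter] at ha hb
    have hadj := Wb_clique m n ha.1 hb.1 hab
    rcases weak_singleton_or hf hadj with h | h
    · exact ha.2 h
    · exact hb.2 h
  have hsum := Finset.card_filter_add_card_filter_not
    (s := Wb m n e) (p := fun v => (f v).card = 1)
  rw [Wb_card] at hsum
  omega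

lemma lower_bound {f : Fin m ⊕ ((SimpleGraph.pathGraph m).edgeSet × Fin n) → Finset ℕ}
    (hf : IsWeakIASI (edgeCorona (SimpleGraph.pathGraph m) (⊤ : SimpleGraph (Fin n))) f) :
    (m - 1) * ((n + 1).choose 2) ≤
      monoEdgeCount (edgeCorona (SimpleGraph.pathGraph m) (⊤ : SimpleGraph (Fin n))) f := by
  rw [monoEdgeCount_eq]
  calc (m - 1) * ((n + 1).choose 2)
      = ∑ _e ∈ (univ : Finset ((SimpleGraph.pathGraph m).edgeSet)), (n + 1).choose 2 := by
        rw [Finset.sum_const, card_univ, card_pathGraph_edgeSet, smul_eq_mul]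
    _ ≤ ∑ e ∈ (univ : Finset ((SimpleGraph.pathGraph m).edgeSet)), (Tb m n f e).card :=
        Finset.sum_le_sum fun e _ => Tb_card_lower m n hf e
    _ = ((univ : Finset ((SimpleGraph.pathGraph m).edgeSet)).biUnion (Tb m n f)).card :=
        (Finset.card_biUnion fun e _ e' _ hee => Tb_disjoint m n f hee).symm
    _ ≤ (MF m n f).card := by
        apply Finset.card_le_card
        rw [Finset.biUnion_subset]
        exact fun e _ => Tb_subset_MF m n hf e

/-- The chosen set of doubleton-labelled vertices. -/
def Dch : Fin m ⊕ ((SimpleGraph.pathGraph m).edgeSet × Fin n) → Prop :=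
  Sum.elim (fun u => n = 0 ∧ u.1 % 2 = 1) (fun p => p.2.1 = 0)

lemma Dch_indep {a b : Fin m ⊕ ((SimpleGraph.pathGraph m).edgeSet × Fin n)}
    (h : (edgeCorona (SimpleGraph.pathGraph m) (⊤ : SimpleGraph (Fin n))).Adj a b) :
    ¬ (Dch m n a ∧ Dch m n b) := by
  rintro ⟨hda, hdb⟩
  cases a with
  | inl u =>
    cases b with
    | inl v =>
      rw [edgeCorona_adj_inl_inl, SimpleGraph.pathGraph_adj] at h
      obtain ⟨_, hu⟩ := hda
      obtain ⟨_, hv⟩ := hdb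
      omega
    | inr p =>
      obtain ⟨hn, _⟩ := hda
      have := p.2.2
      omega
  | inr p =>
    cases b with
    | inl v =>
      obtain ⟨hn, _⟩ := hdb
      have := p.2.2
      omega
    | inr q =>
      rw [edgeCorona_adj_inr_inr, SimpleGraph.top_adj] at h
      exact h.2 (Fin.ext ((hda : p.2.1 = 0).trans (hdb : q.2.1 = 0).symm))

lemma Dch_witness (e : (SimpleGraph.pathGraph m).edgeSet) :
    ∃ w ∈ Wb m n e, Dch m n w := by
  rcases Nat.eq_zero_or_pos n with hn | hn
  · obtain ⟨z, hz⟩ := e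
    induction z using Sym2.ind with | _ u v => ?_
    have hadj : (SimpleGraph.pathGraph m).Adj u v := hz
    rw [SimpleGraph.pathGraph_adj] at hadj
    by_cases hu : u.1 % 2 = 1
    · exact ⟨inl u, (mem_Wb_inl m n).2 (Sym2.mem_mk_left u v), ⟨hn, hu⟩⟩
    · refine ⟨inl v, (mem_Wb_inl m n).2 (Sym2.mem_mk_right u v), ⟨hn, ?_⟩⟩
      omega
  · refine ⟨inr (e, ⟨0, hn⟩), (mem_Wb_inr m n).2 rfl, rfl⟩

/-- The optimal weak IASI. -/
noncomputable def fopt : Fin m ⊕ ((SimpleGraph.pathGraph m).edgeSet × Fin n) → Finset ℕ :=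
  cf (fun v => (Fintype.equivFin _ v).1) (Dch m n)

lemma fopt_weak :
    IsWeakIASI (edgeCorona (SimpleGraph.pathGraph m) (⊤ : SimpleGraph (Fin n))) (fopt m n) := by
  apply cf_weak
  · intro a b h
    exact (Fintype.equivFin _).injective (Fin.ext h)
  · exact fun _ _ h => Dch_indep m n h

lemma Tb_card_upper (e : (SimpleGraph.pathGraph m).edgeSet) :
    (Tb m n (fopt m n) e).card ≤ (n + 1).choose 2 := by
  rw [Tb_card_eq]
  apply Nat.choose_le_choose
  obtain ⟨w, hw, hdw⟩ := Dch_witness m n e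
  have hsub : ((Wb m n e).filter fun v => ((fopt m n) v).card = 1) ⊆ (Wb m n e).erase w := by
    intro v hv
    rw [Finset.mem_filter] at hv
    rw [Finset.mem_erase]
    refine ⟨?_, hv.1⟩
    rintro rfl
    rw [fopt, cf_card_D _ _ hdw] at hv
    omega
  calc ((Wb m n e).filter fun v => ((fopt m n) v).card = 1).card
      ≤ ((Wb m n e).erase w).card := Finset.card_le_card hsub
    _ = n + 1 := by rw [Finset.card_erase_of_mem hw, Wb_card]; omega

lemma upper_bound :
    monoEdgeCount (edgeCorona (SimpleGraph.pathGraph m) (⊤ : SimpleGraph (Fin n))) (fopt m n)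
      ≤ (m - 1) * ((n + 1).choose 2) := by
  rw [monoEdgeCount_eq]
  have hsub : MF m n (fopt m n) ⊆
      (univ : Finset ((SimpleGraph.pathGraph m).edgeSet)).biUnion (Tb m n (fopt m n)) := by
    intro x hx
    rw [MF, Set.mem_toFinset] at hx
    obtain ⟨hedge, hmono⟩ := hx
    induction x using Sym2.ind with | _ a b => ?_
    rw [SimpleGraph.mem_edgeSet] at hedge
    simp only [edgeLabel, Sym2.lift_mk] at hmono
    obtain ⟨e, ha, hb⟩ := adj_block m n hedge
    obtain ⟨hda, hdb⟩ := cf_mono _ (Dch m n) (Dch_indep m n hedge) hmono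
    rw [Finset.mem_biUnion]
    refine ⟨e, mem_univ _, ?_⟩
    rw [Tb, Finset.mem_image]
    refine ⟨(a, b), ?_, rfl⟩
    rw [Finset.mem_offDiag]
    exact ⟨Finset.mem_filter.2 ⟨ha, cf_card_nD _ _ hda⟩,
      Finset.mem_filter.2 ⟨hb, cf_card_nD _ _ hdb⟩, hedge.ne⟩
  calc (MF m n (fopt m n)).card
      ≤ ((univ : Finset ((SimpleGraph.pathGraph m).edgeSet)).biUnion (Tb m n (fopt m n))).card :=
        Finset.card_le_card hsub
    _ ≤ ∑ e ∈ (univ : Finset ((SimpleGraph.pathGraph m).edgeSet)), (Tb m n (fopt m n) e).card :=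
        Finset.card_biUnion_le
    _ ≤ ∑ _e ∈ (univ : Finset ((SimpleGraph.pathGraph m).edgeSet)), (n + 1).choose 2 :=
        Finset.sum_le_sum fun e _ => Tb_card_upper m n e
    _ = (m - 1) * ((n + 1).choose 2) := by
        rw [Finset.sum_const, card_univ, card_pathGraph_edgeSet, smul_eq_mul]

end Specific

lemma target_arith (m n : ℕ) : n * (n + 1) * (m - 1) / 2 = (m - 1) * ((n + 1).choose 2) := by
  obtain ⟨c, hc⟩ := Nat.even_mul_succ_self n
  have h2 : (n + 1).choose 2 = c := by
    rw [Nat.choose_two_right]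
    simp only [Nat.add_sub_cancel]
    rw [mul_comm, hc]
    omega
  have h3 : n * (n + 1) * (m - 1) = 2 * (c * (m - 1)) := by
    rw [hc]; ring
  rw [h2, h3, Nat.mul_div_cancel_left _ (by norm_num : 0 < 2), mul_comm]

/-- `φ(Pₘ ⋄ Kₙ) = n(n+1)(m−1)/2` for `m > 1`. -/
theorem sparing_edgeCorona_path_complete (m n : ℕ) (hm : 1 < m) :
    sparingNumber (edgeCorona (SimpleGraph.pathGraph m) (⊤ : SimpleGraph (Fin n))) =
      n * (n + 1) * (m - 1) / 2 := by
  have hmem : monoEdgeCount (edgeCorona (SimpleGraph.pathGraph m) (⊤ : SimpleGraph (Fin n)))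
      (fopt m n) ∈ { k | ∃ f, IsWeakIASI (edgeCorona (SimpleGraph.pathGraph m)
        (⊤ : SimpleGraph (Fin n))) f ∧ monoEdgeCount (edgeCorona (SimpleGraph.pathGraph m)
        (⊤ : SimpleGraph (Fin n))) f = k } := ⟨fopt m n, fopt_weak m n, rfl⟩
  rw [sparingNumber, target_arith]
  apply le_antisymm
  · exact (Nat.sInf_le hmem).trans (upper_bound m n)
  · apply le_csInf ⟨_, hmem⟩
    rintro k ⟨f, hf, rfl⟩
    exact lower_bound m n hf

end IASIPaper
end
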